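/- arXiv:2004.07638 — 2 statements merged into one kernel-verified Lean document; each statement's English description precedes it below -/
import Mathlib

section
/- Let f : ℝ³ → ℝ be nonnegative, measurable, with ∫ f dv = ρ > 0, define U = (1/ρ)∫ v f dv and T = (1/(3ρ))∫ |v − U|² f dv, and suppose N_0 := sup_v f(v) < ∞. Then ρ / T^{3/2} ≤ C N_0 for a universal constant C > 0; equivalently, the density is bounded by a constant times the supremum of f times the temperature to the power 3/2. -/
/-! By Chebyshev's inequality the mass of `f` outside the ball of radius `R` about `U` is at
most `3ρT / R²`, while inside it is at most `N₀ |B_R| = (4π/3) N₀ R³`. Taking `R = 2√T` the outer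
part is at most `3ρ/4`, hence `ρ / 4 ≤ (32π/3) N₀ T^{3/2}`, i.e. the bound holds with
`C = 128π/3`. -/

open MeasureTheory Metric

theorem setIntegral_le_mul_measureReal {X : Type*} [MeasurableSpace X] {μ : Measure X}
    {f : X → ℝ} {s : Set X} (hs : MeasurableSet s) (hμs : μ s ≠ ⊤) (hf : IntegrableOn f s μ)
    {N₀ : ℝ} (hfN : ∀ x, f x ≤ N₀) :
    ∫ x in s, f x ∂μ ≤ N₀ * μ.real s :=
  calc ∫ x in s, f x ∂μ ≤ ∫ x in s, N₀ ∂μ :=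
        setIntegral_mono_on hf (integrableOn_const hμs) hs fun x _ => hfN x
    _ = N₀ * μ.real s := by rw [setIntegral_const, smul_eq_mul, mul_comm]

section NormedSpace

variable {E : Type*} [NormedAddCommGroup E] [MeasurableSpace E] [OpensMeasurableSpace E]
  {μ : Measure E} {f : E → ℝ}

theorem MeasureTheory.Integrable.mul_norm_sub_sq (hf : Integrable f μ)
    (hf2 : Integrable (fun v => f v * ‖v‖ ^ 2) μ) (U : E) :
    Integrable (fun v => f v * ‖v - U‖ ^ 2) μ := by
  have hmeas : AEStronglyMeasurable (fun v => f v * ‖v - U‖ ^ 2) μ :=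
    hf.aestronglyMeasurable.mul
      ((continuous_id.sub continuous_const).norm.pow 2).aestronglyMeasurable
  refine ((hf2.norm.const_mul 2).add (hf.norm.const_mul (2 * ‖U‖ ^ 2))).mono' hmeas
    (ae_of_all _ fun v => ?_)
  have hsq : ‖v - U‖ ^ 2 ≤ 2 * (‖v‖ ^ 2 + ‖U‖ ^ 2) :=
    (pow_le_pow_left₀ (norm_nonneg _) (norm_sub_le v U) 2).trans add_sq_le
  simp only [norm_mul, norm_pow, norm_norm, Pi.add_apply]
  nlinarith [norm_nonneg (f v)]

theorem setIntegral_compl_ball_le (hf0 : ∀ v, 0 ≤ f v)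
    (hf : Integrable f μ) {U : E} (hfU : Integrable (fun v => f v * ‖v - U‖ ^ 2) μ)
    {R : ℝ} (hR : 0 < R) :
    ∫ v in (ball U R)ᶜ, f v ∂μ ≤ (∫ v, f v * ‖v - U‖ ^ 2 ∂μ) / R ^ 2 := by
  have hpointwise : ∀ v ∈ (ball U R)ᶜ, f v ≤ f v * ‖v - U‖ ^ 2 / R ^ 2 := by
    intro v hv
    have hRv : R ^ 2 ≤ ‖v - U‖ ^ 2 :=
      pow_le_pow_left₀ hR.le (by simpa [dist_eq_norm] using hv) 2
    rw [le_div_iff₀ (by positivity)]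
    exact mul_le_mul_of_nonneg_left hRv (hf0 v)
  calc ∫ v in (ball U R)ᶜ, f v ∂μ
      ≤ ∫ v in (ball U R)ᶜ, f v * ‖v - U‖ ^ 2 / R ^ 2 ∂μ :=
        setIntegral_mono_on hf.integrableOn (hfU.div_const _).integrableOn
          measurableSet_ball.compl hpointwise
    _ = (∫ v in (ball U R)ᶜ, f v * ‖v - U‖ ^ 2 ∂μ) / R ^ 2 := integral_div _ _
    _ ≤ (∫ v, f v * ‖v - U‖ ^ 2 ∂μ) / R ^ 2 := by
        gcongr ?_ / _
        exact setIntegral_le_integral hfU (ae_of_all _ fun v => mul_nonneg (hf0 v) (sq_nonneg _))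

theorem integral_le_mul_measureReal_ball_add [ProperSpace E]
    [IsFiniteMeasureOnCompacts μ] (hf0 : ∀ v, 0 ≤ f v) {N₀ : ℝ} (hfN : ∀ v, f v ≤ N₀)
    (hf : Integrable f μ) {U : E} (hfU : Integrable (fun v => f v * ‖v - U‖ ^ 2) μ)
    {R : ℝ} (hR : 0 < R) :
    ∫ v, f v ∂μ ≤ N₀ * μ.real (ball U R) + (∫ v, f v * ‖v - U‖ ^ 2 ∂μ) / R ^ 2 := by
  rw [← integral_add_compl measurableSet_ball hf]
  exact add_le_add
    (setIntegral_le_mul_measureReal measurableSet_ball measure_ball_lt_top.ne hf.integrableOn hfN)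
    (setIntegral_compl_ball_le hf0 hf hfU hR)

end NormedSpace

theorem EuclideanSpace.volume_real_ball_fin_three (U : EuclideanSpace ℝ (Fin 3)) {R : ℝ} (hR : 0 ≤ R) :
    volume.real (ball U R) = 4 / 3 * Real.pi * R ^ 3 := by
  rw [measureReal_def, EuclideanSpace.volume_ball_fin_three, ENNReal.toReal_mul,
    ENNReal.toReal_pow, ENNReal.toReal_ofReal hR, ENNReal.toReal_ofReal (by positivity)]
  ring

theorem Real.rpow_three_halves_eq_mul_sqrt {T : ℝ} (hT : 0 ≤ T) : T ^ ((3 : ℝ) / 2) = T * √T := by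
  rw [Real.sqrt_eq_rpow, ← Real.rpow_one_add' hT (by norm_num)]
  norm_num

/-- Estimate `ρ / T^{3/2} ≤ C N₀` for the macroscopic quantities of a nonnegative
distribution function `f` on `ℝ³` bounded by `N₀`. -/
theorem density_le_temperature_bound :
    ∃ C : ℝ, 0 < C ∧
      ∀ (f : EuclideanSpace ℝ (Fin 3) → ℝ) (ρ N₀ T : ℝ)
        (U : EuclideanSpace ℝ (Fin 3)),
        Measurable f → (∀ v, 0 ≤ f v) →
        Integrable f volume →
        Integrable (fun v => f v • v) volume →
        Integrable (fun v => f v * ‖v‖ ^ 2) volume →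
        (∫ v, f v) = ρ → 0 < ρ →
        U = ρ⁻¹ • ∫ v, f v • v →
        T = (3 * ρ)⁻¹ * ∫ v, f v * ‖v - U‖ ^ 2 → 0 < T →
        (∀ v, f v ≤ N₀) →
        ρ / T ^ ((3 : ℝ) / 2) ≤ C * N₀ := by
  refine ⟨128 / 3 * Real.pi, by positivity, ?_⟩
  intro f ρ N₀ T U _ hf0 hf _ hf2 hρ hρpos _ hT hTpos hfN
  have hmoment : ∫ v, f v * ‖v - U‖ ^ 2 = 3 * ρ * T := by
    rw [hT]; field_simp
  have hsplit := integral_le_mul_measureReal_ball_add hf0 hfN hf (hf.mul_norm_sub_sq hf2 U)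
    (R := 2 * √T) (by positivity)
  have hR2 : (2 * √T) ^ 2 = 4 * T := by rw [mul_pow, Real.sq_sqrt hTpos.le]; ring
  have hR3 : (2 * √T) ^ 3 = 8 * (T * √T) := by rw [pow_succ, hR2]; ring
  rw [hρ, hmoment, EuclideanSpace.volume_real_ball_fin_three U (by positivity), hR2, hR3] at hsplit
  have htail : 3 * ρ * T / (4 * T) = 3 / 4 * ρ := by field_simp
  rw [div_le_iff₀ (by positivity), Real.rpow_three_halves_eq_mul_sqrt hTpos.le]
  linarith
end

section
/- Let f : ℝ³ → ℝ be nonnegative measurable with ρ = ∫ f dv > 0, U = ρ^{−1}∫ v f dv, T = (3ρ)^{−1}∫ |v−U|² f dv, and suppose N_q := sup_v f(v)|v|^q < ∞ for some q > 5. Then ρ (3T + |U|²)^{(q−3)/2} ≤ C N_q for a constant C depending only on q. -/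
open MeasureTheory

open RealInnerProductSpace in
private lemma moment_identity (f : EuclideanSpace ℝ (Fin 3) → ℝ) (ρ T : ℝ)
    (U : EuclideanSpace ℝ (Fin 3))
    (hf : Integrable f volume)
    (hfv : Integrable (fun v => f v • v) volume)
    (hfv2 : Integrable (fun v => f v * ‖v‖ ^ 2) volume)
    (hρdef : (∫ v, f v) = ρ) (hρ : 0 < ρ)
    (hU : U = ρ⁻¹ • ∫ v, f v • v)
    (hT : T = (3 * ρ)⁻¹ * ∫ v, f v * ‖v - U‖ ^ 2) :
    ρ * (3 * T + ‖U‖ ^ 2) = ∫ v, f v * ‖v‖ ^ 2 := by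
  have hIv : (∫ v, f v • v) = ρ • U := by
    rw [hU, smul_smul, mul_inv_cancel₀ hρ.ne', one_smul]
  have hinner : Integrable (fun v => ⟪U, f v • v⟫) volume := hfv.const_inner U
  have hsub : (fun v : EuclideanSpace ℝ (Fin 3) => f v * ‖v - U‖ ^ 2)
      = fun v => f v * ‖v‖ ^ 2 - 2 * ⟪U, f v • v⟫ + ‖U‖ ^ 2 * f v := by
    funext v
    rw [norm_sub_sq_real, real_inner_smul_right, real_inner_comm]
    ring
  have hint2 : (∫ v, ⟪U, f v • v⟫) = ρ * ‖U‖ ^ 2 := by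
    rw [integral_inner hfv U, hIv, real_inner_smul_right, real_inner_self_eq_norm_sq]
  have hI : (∫ v, f v * ‖v - U‖ ^ 2) = (∫ v, f v * ‖v‖ ^ 2) - ρ * ‖U‖ ^ 2 := by
    have hint1 : Integrable (fun v => f v * ‖v‖ ^ 2 - 2 * ⟪U, f v • v⟫) volume :=
      hfv2.sub (hinner.const_mul 2)
    rw [hsub, integral_add hint1 (hf.const_mul _),
      integral_sub hfv2 (hinner.const_mul 2), integral_const_mul, integral_const_mul,
      hint2, hρdef]
    ring
  rw [hT, hI]
  field_simp
  ring

private lemma aux_integrable {q : ℝ} (hq : 5 < q) {R : ℝ} (hR : 0 < R) :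
    Integrable (fun v : EuclideanSpace ℝ (Fin 3) =>
      if R < ‖v‖ then ‖v‖ ^ (2 - q) else 0) volume := by
  have hfin : (Module.finrank ℝ (EuclideanSpace ℝ (Fin 3)) : ℝ) < q - 2 := by
    simp [finrank_euclideanSpace]; linarith
  have hmaj : Integrable (fun v : EuclideanSpace ℝ (Fin 3) =>
      (1 + 1 / R) ^ (q - 2) * (1 + ‖v‖) ^ (-(q - 2))) volume :=
    (integrable_one_add_norm hfin).const_mul _
  refine hmaj.mono' ?_ (Filter.Eventually.of_forall fun v => ?_)
  · refine (Measurable.ite (measurableSet_lt measurable_const measurable_norm)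
      ?_ measurable_const).aestronglyMeasurable
    exact measurable_norm.pow_const _
  · by_cases h : R < ‖v‖
    · simp only [h, if_true]
      have hv : (0 : ℝ) < ‖v‖ := hR.trans h
      rw [Real.norm_of_nonneg (Real.rpow_nonneg hv.le _)]
      have h1 : (1 : ℝ) + ‖v‖ ≤ ‖v‖ * (1 + 1 / R) := by
        have : (1 : ℝ) < ‖v‖ / R := (one_lt_div hR).mpr h
        have h2 : ‖v‖ * (1 + 1 / R) = ‖v‖ + ‖v‖ / R := by ring
        rw [h2]; linarith
      have h3 : ((1 : ℝ) + ‖v‖) ^ (-(q - 2)) ≥ (‖v‖ * (1 + 1 / R)) ^ (-(q - 2)) :=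
        Real.rpow_le_rpow_of_nonpos (by positivity) h1 (by linarith)
      have h4 : (‖v‖ * (1 + 1 / R)) ^ (-(q - 2))
          = ‖v‖ ^ (2 - q) * (1 + 1 / R) ^ (-(q - 2)) := by
        rw [Real.mul_rpow hv.le (by positivity)]
        norm_num
      have h5 : (0:ℝ) < (1 + 1 / R) ^ (q - 2) := by positivity
      have h6 : ((1:ℝ) + 1 / R) ^ (-(q-2)) * ((1:ℝ) + 1 / R) ^ (q-2) = 1 := by
        rw [← Real.rpow_add (by positivity)]; simp
      calc ‖v‖ ^ (2 - q)
          = (‖v‖ * (1 + 1 / R)) ^ (-(q - 2)) * (1 + 1 / R) ^ (q - 2) := by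
            rw [h4, mul_assoc, h6, mul_one]
        _ ≤ (1 + ‖v‖) ^ (-(q - 2)) * (1 + 1 / R) ^ (q - 2) := by
            exact mul_le_mul_of_nonneg_right h3 h5.le
        _ = (1 + 1 / R) ^ (q - 2) * (1 + ‖v‖) ^ (-(q - 2)) := by ring
    · simp only [h, if_false, norm_zero]
      positivity

private lemma aux_scaling {q R : ℝ} (hR : 0 < R) :
    (∫ v : EuclideanSpace ℝ (Fin 3), (if R < ‖v‖ then ‖v‖ ^ (2 - q) else 0))
      = R ^ (5 - q) *
        ∫ v : EuclideanSpace ℝ (Fin 3), (if 1 < ‖v‖ then ‖v‖ ^ (2 - q) else 0) := by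
  have key := MeasureTheory.Measure.integral_comp_inv_smul_of_nonneg volume
    (fun v : EuclideanSpace ℝ (Fin 3) => if 1 < ‖v‖ then ‖v‖ ^ (2 - q) else 0) hR.le
  have hpt : ∀ x : EuclideanSpace ℝ (Fin 3),
      (if 1 < ‖(R⁻¹ • x : EuclideanSpace ℝ (Fin 3))‖ then
        ‖(R⁻¹ • x : EuclideanSpace ℝ (Fin 3))‖ ^ (2 - q) else 0)
      = R ^ (q - 2) * (if R < ‖x‖ then ‖x‖ ^ (2 - q) else 0) := by
    intro x
    rw [norm_smul, Real.norm_of_nonneg (inv_nonneg.mpr hR.le)]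
    have hiff : (1 < R⁻¹ * ‖x‖) ↔ (R < ‖x‖) := by
      rw [lt_inv_mul_iff₀ hR, mul_one]
    by_cases h : R < ‖x‖
    · rw [if_pos (hiff.mpr h), if_pos h,
        Real.mul_rpow (inv_nonneg.mpr hR.le) (norm_nonneg x),
        Real.inv_rpow hR.le, ← Real.rpow_neg hR.le,
        show -(2 - q) = q - 2 from by ring]
    · rw [if_neg (fun hh => h (hiff.mp hh)), if_neg h, mul_zero]
  simp only [hpt] at key
  rw [integral_const_mul] at key
  have hfr : Module.finrank ℝ (EuclideanSpace ℝ (Fin 3)) = 3 := by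
    simp [finrank_euclideanSpace]
  rw [hfr] at key
  have hRq : (0:ℝ) < R ^ (q - 2) := Real.rpow_pos_of_pos hR _
  have : (∫ v : EuclideanSpace ℝ (Fin 3), (if R < ‖v‖ then ‖v‖ ^ (2 - q) else 0))
      = (R ^ (q - 2))⁻¹ * (R ^ (3:ℕ) •
        ∫ v : EuclideanSpace ℝ (Fin 3), (if 1 < ‖v‖ then ‖v‖ ^ (2 - q) else 0)) := by
    rw [← key]; field_simp
  rw [this, smul_eq_mul, ← mul_assoc]
  congr 1
  rw [← Real.rpow_neg hR.le, ← Real.rpow_natCast R 3, ← Real.rpow_add hR]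
  congr 1
  ring

/-- Estimate `ρ (3T + |U|²)^{(q−3)/2} ≤ C N_q` for `q > 5`, where
`N_q = sup_v f(v)|v|^q`, with `C` depending only on `q`. -/
theorem density_energy_bound_by_Nq :
    ∀ q : ℝ, 5 < q →
      ∃ C : ℝ, 0 < C ∧
        ∀ (f : EuclideanSpace ℝ (Fin 3) → ℝ) (ρ Nq T : ℝ)
          (U : EuclideanSpace ℝ (Fin 3)),
          Measurable f → (∀ v, 0 ≤ f v) →
          Integrable f volume →
          Integrable (fun v => f v • v) volume →
          Integrable (fun v => f v * ‖v‖ ^ 2) volume →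
          (∫ v, f v) = ρ → 0 < ρ →
          U = ρ⁻¹ • ∫ v, f v • v →
          T = (3 * ρ)⁻¹ * ∫ v, f v * ‖v - U‖ ^ 2 → 0 ≤ T →
          (∀ v, f v * ‖v‖ ^ q ≤ Nq) →
          ρ * (3 * T + ‖U‖ ^ 2) ^ ((q - 3) / 2) ≤ C * Nq := by
  intro q hq
  set J : ℝ := ∫ v : EuclideanSpace ℝ (Fin 3), (if 1 < ‖v‖ then ‖v‖ ^ (2 - q) else 0)
    with hJdef
  have hJ0 : 0 ≤ J := by
    apply integral_nonneg
    intro v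
    by_cases h : 1 < ‖v‖ <;> simp [h, Real.rpow_nonneg (norm_nonneg v)]
  refine ⟨2 ^ ((q - 3) / 2) * (J + 1), by positivity, ?_⟩
  intro f ρ Nq T U hmeas hpos hf hfv hfv2 hρdef hρ hU hT hT0 hNq
  have hNq0 : 0 ≤ Nq := by
    have h0 := hNq 0
    rw [norm_zero, Real.zero_rpow (by linarith : q ≠ 0), mul_zero] at h0
    exact h0
  have hkey : ρ * (3 * T + ‖U‖ ^ 2) = ∫ v, f v * ‖v‖ ^ 2 :=
    moment_identity f ρ T U hf hfv hfv2 hρdef hρ hU hT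
  set Ee : ℝ := 3 * T + ‖U‖ ^ 2 with hEdef
  have hE0 : 0 ≤ Ee := by positivity
  rcases hE0.eq_or_lt with hE | hE
  · rw [← hE, Real.zero_rpow (by linarith : (0:ℝ) < (q - 3) / 2).ne', mul_zero]
    have h2p : (0:ℝ) < 2 ^ ((q - 3) / 2) := Real.rpow_pos_of_pos (by norm_num) _
    exact mul_nonneg (mul_nonneg h2p.le (by linarith)) hNq0
  · -- main case
    set R : ℝ := (Ee / 2) ^ ((1:ℝ) / 2) with hRdef
    have hR : 0 < R := Real.rpow_pos_of_pos (by linarith) _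
    have hR2 : R ^ (2:ℕ) = Ee / 2 := by
      rw [hRdef, ← Real.rpow_natCast (((Ee/2) ^ ((1:ℝ)/2))) 2, ← Real.rpow_mul (by linarith)]
      norm_num
    set g : EuclideanSpace ℝ (Fin 3) → ℝ :=
      fun v => if R < ‖v‖ then ‖v‖ ^ (2 - q) else 0 with hgdef
    have hgint : Integrable g volume := aux_integrable hq hR
    have hpt : ∀ v, f v * ‖v‖ ^ 2 ≤ R ^ 2 * f v + Nq * g v := by
      intro v
      by_cases h : R < ‖v‖
      · have hv : (0:ℝ) < ‖v‖ := hR.trans h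
        have h1 : f v * ‖v‖ ^ 2 ≤ Nq * ‖v‖ ^ (2 - q) := by
          have h2 : (‖v‖:ℝ) ^ (2:ℕ) = ‖v‖ ^ q * ‖v‖ ^ (2 - q) := by
            rw [← Real.rpow_add hv, ← Real.rpow_natCast ‖v‖ 2]
            norm_num
          rw [h2, ← mul_assoc]
          exact mul_le_mul_of_nonneg_right (hNq v) (Real.rpow_nonneg hv.le _)
        have h3 : 0 ≤ R ^ 2 * f v := mul_nonneg (pow_nonneg hR.le 2) (hpos v)
        simp only [hgdef, if_pos h]
        linarith
      · have h1 : f v * ‖v‖ ^ 2 ≤ R ^ 2 * f v := by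
          have : ‖v‖ ^ 2 ≤ R ^ 2 := by
            apply pow_le_pow_left₀ (norm_nonneg v) (not_lt.mp h)
          nlinarith [hpos v]
        simp only [hgdef, if_neg h, mul_zero]
        linarith
    have hS : (∫ v, f v * ‖v‖ ^ 2) ≤ R ^ 2 * ρ + Nq * ∫ v, g v := by
      calc (∫ v, f v * ‖v‖ ^ 2)
          ≤ ∫ v, (R ^ 2 * f v + Nq * g v) :=
            integral_mono hfv2 ((hf.const_mul _).add (hgint.const_mul _)) hpt
        _ = R ^ 2 * ρ + Nq * ∫ v, g v := by
            rw [integral_add (hf.const_mul _) (hgint.const_mul _), integral_const_mul,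
              integral_const_mul, hρdef]
    have hscale : (∫ v, g v) = R ^ (5 - q) * J := aux_scaling hR
    have hstep : ρ * Ee ≤ 2 * (Nq * (R ^ (5 - q) * J)) := by
      rw [hkey]
      rw [hscale, hR2] at hS
      nlinarith [hS]
    -- now convert powers
    have hR5q : R ^ (5 - q) = Ee ^ ((5 - q) / 2) * 2 ^ ((q - 5) / 2) := by
      rw [hRdef, ← Real.rpow_mul (by linarith : (0:ℝ) ≤ Ee / 2), one_div,
        inv_mul_eq_div, Real.div_rpow (by linarith) (by norm_num)]
      rw [div_eq_mul_inv, ← Real.rpow_neg (by norm_num),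
        show -((5 - q) / 2) = (q - 5) / 2 from by ring]
    have hEsplit : Ee ^ ((q - 3) / 2) = Ee * Ee ^ ((q - 5) / 2) := by
      have : (q - 3) / 2 = 1 + (q - 5) / 2 := by ring
      rw [this, Real.rpow_add hE, Real.rpow_one]
    have hEcancel : Ee ^ ((5 - q) / 2) * Ee ^ ((q - 5) / 2) = 1 := by
      rw [← Real.rpow_add hE, show (5 - q) / 2 + (q - 5) / 2 = 0 from by ring,
        Real.rpow_zero]
    have hEpow : (0:ℝ) ≤ Ee ^ ((q - 5) / 2) := Real.rpow_nonneg hE.le _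
    have h2pow : (2:ℝ) * 2 ^ ((q - 5) / 2) = 2 ^ ((q - 3) / 2) := by
      nth_rewrite 1 [← Real.rpow_one 2]
      rw [← Real.rpow_add (by norm_num)]
      congr 1
      ring
    calc ρ * Ee ^ ((q - 3) / 2) = (ρ * Ee) * Ee ^ ((q - 5) / 2) := by
          rw [hEsplit]; ring
      _ ≤ (2 * (Nq * (R ^ (5 - q) * J))) * Ee ^ ((q - 5) / 2) :=
          mul_le_mul_of_nonneg_right hstep hEpow
      _ = 2 ^ ((q - 3) / 2) * J * Nq := by
          rw [hR5q, ← h2pow]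
          linear_combination (2 * Nq * 2 ^ ((q - 5) / 2) * J) * hEcancel
      _ ≤ 2 ^ ((q - 3) / 2) * (J + 1) * Nq := by
          have h2p : (0:ℝ) < 2 ^ ((q - 3) / 2) := Real.rpow_pos_of_pos (by norm_num) _
          nlinarith
end
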